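/- arXiv:1906.04223 — 3 statements merged into one kernel-verified Lean document; each statement's English description precedes it below -/
import Mathlib

section
/- Let M be an m×n complex matrix and let ρ be an integer with 1 ≤ ρ < min(m,n). Then the minimum of ‖M − N‖₂ over all m×n matrices N of rank at most ρ equals σ_{ρ+1}(M), the (ρ+1)-st largest singular value of M, and this minimum is attained by the ρ-truncation M_ρ of M. -/
open Matrix
open scoped Matrix.Norms.L2Operator

/-- Spectral norm of a complex matrix, i.e. the operator norm of the induced
linear map between Euclidean spaces. -/
noncomputable def spec {m n : ℕ} (A : Matrix (Fin m) (Fin n) ℂ) : ℝ :=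
  ‖LinearMap.toContinuousLinearMap (Matrix.toEuclideanLin A)‖

lemma spec_eq_norm {m n : ℕ} (A : Matrix (Fin m) (Fin n) ℂ) : spec A = ‖A‖ := rfl

lemma eym_dot_self {k : ℕ} (u : Fin k → ℂ) : star u ⬝ᵥ u = ((∑ i, ‖u i‖^2 : ℝ) : ℂ) := by
  push_cast
  simp only [dotProduct, Pi.star_apply]
  refine Finset.sum_congr rfl fun i _ => ?_
  rw [Complex.star_def, Complex.conj_mul']

lemma eym_en_iso {a b : ℕ} (A : Matrix (Fin a) (Fin b) ℂ) (hA : Aᴴ * A = 1) (v : Fin b → ℂ) :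
    ‖(WithLp.equiv 2 (Fin a → ℂ)).symm (A *ᵥ v)‖ = ‖(WithLp.equiv 2 (Fin b → ℂ)).symm v‖ := by
  have key : star (A *ᵥ v) ⬝ᵥ (A *ᵥ v) = star v ⬝ᵥ v := by
    rw [star_mulVec, dotProduct_mulVec, vecMul_vecMul, hA, vecMul_one]
  rw [eym_dot_self, eym_dot_self] at key
  have key2 : (∑ i, ‖(A *ᵥ v) i‖^2 : ℝ) = ∑ i, ‖v i‖^2 := by exact_mod_cast key
  rw [EuclideanSpace.norm_eq, EuclideanSpace.norm_eq]
  congr 1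

lemma eym_en_diag_le {k : ℕ} (d : Fin k → ℝ) (c : ℝ) (hc : 0 ≤ c) (hd : ∀ i, |d i| ≤ c)
    (v : Fin k → ℂ) :
    ‖(WithLp.equiv 2 (Fin k → ℂ)).symm (diagonal (fun i => (d i : ℂ)) *ᵥ v)‖
      ≤ c * ‖(WithLp.equiv 2 (Fin k → ℂ)).symm v‖ := by
  rw [EuclideanSpace.norm_eq, EuclideanSpace.norm_eq]
  have h1 : ∀ i : Fin k, ‖(diagonal (fun i => (d i : ℂ)) *ᵥ v) i‖^2 ≤ c^2 * ‖v i‖^2 := by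
    intro i
    rw [mulVec_diagonal, norm_mul, mul_pow, Complex.norm_real]
    gcongr
    rw [Real.norm_eq_abs]; exact hd i
  calc Real.sqrt (∑ i, ‖(diagonal (fun i => (d i : ℂ)) *ᵥ v) i‖^2)
      ≤ Real.sqrt (∑ i, c^2 * ‖v i‖^2) := Real.sqrt_le_sqrt (Finset.sum_le_sum fun i _ => h1 i)
    _ = c * Real.sqrt (∑ i, ‖v i‖^2) := by
        rw [← Finset.mul_sum, Real.sqrt_mul (sq_nonneg c), Real.sqrt_sq hc]

lemma eym_en_diag_ge {k : ℕ} (d : Fin k → ℝ) (c : ℝ) (hc : 0 ≤ c) (hd : ∀ i, c ≤ |d i|)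
    (v : Fin k → ℂ) :
    c * ‖(WithLp.equiv 2 (Fin k → ℂ)).symm v‖
      ≤ ‖(WithLp.equiv 2 (Fin k → ℂ)).symm (diagonal (fun i => (d i : ℂ)) *ᵥ v)‖ := by
  rw [EuclideanSpace.norm_eq, EuclideanSpace.norm_eq]
  have h1 : ∀ i : Fin k, c^2 * ‖v i‖^2 ≤ ‖(diagonal (fun i => (d i : ℂ)) *ᵥ v) i‖^2 := by
    intro i
    rw [mulVec_diagonal, norm_mul, mul_pow, Complex.norm_real]
    gcongr
    rw [Real.norm_eq_abs]; exact hd i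
  calc c * Real.sqrt (∑ i, ‖v i‖^2)
      = Real.sqrt (∑ i, c^2 * ‖v i‖^2) := by
        rw [← Finset.mul_sum, Real.sqrt_mul (sq_nonneg c), Real.sqrt_sq hc]
    _ ≤ _ := Real.sqrt_le_sqrt (Finset.sum_le_sum fun i _ => h1 i)

lemma eym_norm_iso_mul {a b k : ℕ} (U : Matrix (Fin a) (Fin k) ℂ) (hU : Uᴴ * U = 1)
    (B : Matrix (Fin k) (Fin b) ℂ) : ‖U * B‖ = ‖B‖ := by
  have h : (U * B)ᴴ * (U * B) = Bᴴ * B := by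
    rw [conjTranspose_mul]
    calc Bᴴ * Uᴴ * (U * B) = Bᴴ * (Uᴴ * U) * B := by
          rw [Matrix.mul_assoc, Matrix.mul_assoc, Matrix.mul_assoc]
      _ = Bᴴ * B := by rw [hU, Matrix.mul_one]
  have h2 := Matrix.l2_opNorm_conjTranspose_mul_self (U * B)
  rw [h, Matrix.l2_opNorm_conjTranspose_mul_self B] at h2
  exact (mul_self_inj_of_nonneg (norm_nonneg _) (norm_nonneg _)).mp h2.symm

lemma eym_norm_mul_iso {a b k : ℕ} (V : Matrix (Fin b) (Fin k) ℂ) (hV : Vᴴ * V = 1)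
    (B : Matrix (Fin a) (Fin k) ℂ) : ‖B * Vᴴ‖ = ‖B‖ := by
  rw [← Matrix.l2_opNorm_conjTranspose (B * Vᴴ), conjTranspose_mul, conjTranspose_conjTranspose,
    eym_norm_iso_mul V hV, Matrix.l2_opNorm_conjTranspose]

lemma eym_en_le_norm {a b : ℕ} (A : Matrix (Fin a) (Fin b) ℂ) (v : Fin b → ℂ) :
    ‖(WithLp.equiv 2 (Fin a → ℂ)).symm (A *ᵥ v)‖
      ≤ ‖A‖ * ‖(WithLp.equiv 2 (Fin b → ℂ)).symm v‖ :=
  A.l2_opNorm_mulVec ((WithLp.equiv 2 (Fin b → ℂ)).symm v)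

lemma eym_norm_le_of_en {a b : ℕ} (A : Matrix (Fin a) (Fin b) ℂ) (c : ℝ) (hc : 0 ≤ c)
    (h : ∀ v : Fin b → ℂ, ‖(WithLp.equiv 2 (Fin a → ℂ)).symm (A *ᵥ v)‖
        ≤ c * ‖(WithLp.equiv 2 (Fin b → ℂ)).symm v‖) : ‖A‖ ≤ c := by
  rw [Matrix.l2_opNorm_def]
  refine ContinuousLinearMap.opNorm_le_bound _ hc fun x => ?_
  simpa [Matrix.toEuclideanLin_apply] using h (WithLp.equiv 2 (Fin b → ℂ) x)


/-- Eckart–Young–Mirsky theorem, spectral-norm version: if `M = U Σ Vᴴ` is an SVD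
of the `m×n` matrix `M` (with nonincreasing nonnegative singular values `σ`) and
`1 ≤ ρ < min m n`, then the `ρ`-truncation `Mρ` (obtained by zeroing all but the `ρ`
largest singular values) has rank at most `ρ`, attains the error `σ_{ρ+1}(M)`
(which is `σ ⟨ρ, _⟩` in 0-based indexing), and this error is minimal among all
matrices `N` of rank at most `ρ`. -/
theorem eckart_young_mirsky_spectral {m n ρ : ℕ} (hρ1 : 1 ≤ ρ) (hρ : ρ < min m n)
    (M : Matrix (Fin m) (Fin n) ℂ)
    (U : Matrix (Fin m) (Fin (min m n)) ℂ) (σ : Fin (min m n) → ℝ)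
    (V : Matrix (Fin n) (Fin (min m n)) ℂ)
    (hU : Uᴴ * U = 1) (hV : Vᴴ * V = 1)
    (hσ0 : ∀ i, 0 ≤ σ i) (hσa : Antitone σ)
    (hM : M = U * Matrix.diagonal (fun i => (σ i : ℂ)) * Vᴴ)
    (Mρ : Matrix (Fin m) (Fin n) ℂ)
    (hMρ : Mρ = U * Matrix.diagonal (fun i : Fin (min m n) => if (i : ℕ) < ρ then (σ i : ℂ) else 0) * Vᴴ) :
    Mρ.rank ≤ ρ ∧ spec (M - Mρ) = σ ⟨ρ, hρ⟩ ∧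
      ∀ N : Matrix (Fin m) (Fin n) ℂ, N.rank ≤ ρ → σ ⟨ρ, hρ⟩ ≤ spec (M - N) := by
  classical
  have hρn : ρ < n := lt_of_lt_of_le hρ (min_le_right m n)
  -- Part 1 : rank
  have part1 : Mρ.rank ≤ ρ := by
    rw [hMρ]
    refine le_trans (le_trans (Matrix.rank_mul_le_left _ _) (Matrix.rank_mul_le_right _ _)) ?_
    rw [Matrix.rank_diagonal]
    have : Fintype.card {i : Fin (min m n) // (if (i : ℕ) < ρ then (σ i : ℂ) else 0) ≠ 0} ≤
        Fintype.card (Fin ρ) := by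
      refine Fintype.card_le_of_injective
        (fun x => ⟨(x.1 : ℕ), by
          by_contra hlt
          exact x.2 (by rw [if_neg hlt])⟩) ?_
      intro x y hxy
      exact Subtype.ext (Fin.ext (by simpa [Fin.ext_iff] using hxy))
    simpa using this
  -- Part 3 : minimality
  have part3 : ∀ N : Matrix (Fin m) (Fin n) ℂ, N.rank ≤ ρ → σ ⟨ρ, hρ⟩ ≤ spec (M - N) := by
    intro N hN
    have hcast : ρ + 1 ≤ min m n := hρ
    set E : Matrix (Fin (min m n)) (Fin (ρ+1)) ℂ :=
      Matrix.of (fun i j => if (i : ℕ) = (j : ℕ) then 1 else 0) with hEdef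
    have hE : Eᴴ * E = 1 := by
      ext j k
      simp only [Matrix.mul_apply, conjTranspose_apply, hEdef, Matrix.of_apply,
        Matrix.one_apply]
      rw [Finset.sum_eq_single (Fin.castLE hcast j)]
      · simp [Fin.ext_iff, Fin.castLE]
      · intro i _ hi
        rw [if_neg, star_zero, zero_mul]
        intro hij
        exact hi (by ext; simpa using hij)
      · intro h
        exact absurd (Finset.mem_univ _) h
    set B : Matrix (Fin n) (Fin (ρ+1)) ℂ := V * E with hBdef
    have hB : Bᴴ * B = 1 := by
      rw [hBdef, conjTranspose_mul]
      calc Eᴴ * Vᴴ * (V * E) = Eᴴ * (Vᴴ * V) * E := by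
            rw [Matrix.mul_assoc, Matrix.mul_assoc, Matrix.mul_assoc]
        _ = 1 := by rw [hV, Matrix.mul_one, hE]
    have hBinj : Function.Injective B.mulVecLin := by
      intro x y hxy
      have := congrArg (fun z => Bᴴ *ᵥ z) hxy
      simpa [Matrix.mulVecLin_apply, Matrix.mulVec_mulVec, hB, Matrix.one_mulVec] using this
    set S : Submodule ℂ (Fin n → ℂ) := LinearMap.range B.mulVecLin with hSdef
    set K : Submodule ℂ (Fin n → ℂ) := LinearMap.ker N.mulVecLin with hKdef
    have hSfin : Module.finrank ℂ S = ρ + 1 := by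
      rw [hSdef, LinearMap.finrank_range_of_inj hBinj]
      simp
    have hrn : N.rank + Module.finrank ℂ K = n := by
      have := LinearMap.finrank_range_add_finrank_ker N.mulVecLin
      simpa [Matrix.rank, hKdef] using this
    have hsup : Module.finrank ℂ (S ⊔ K : Submodule ℂ (Fin n → ℂ)) ≤ n := by
      have := Submodule.finrank_le (S ⊔ K : Submodule ℂ (Fin n → ℂ))
      simpa using this
    have hdim := Submodule.finrank_sup_add_finrank_inf_eq S K
    have hpos : 0 < Module.finrank ℂ (S ⊓ K : Submodule ℂ (Fin n → ℂ)) := by omega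
    have hex : ∃ w, w ∈ S ⊓ K ∧ w ≠ 0 := by
      by_contra hcon
      push_neg at hcon
      have hbot : (S ⊓ K : Submodule ℂ (Fin n → ℂ)) = ⊥ := by
        rw [Submodule.eq_bot_iff]
        intro x hx
        by_contra hx0
        exact hx0 (by by_contra h; exact h (hcon x hx))
      rw [hbot, finrank_bot] at hpos
      exact lt_irrefl 0 hpos
    obtain ⟨w, hwSK, hw0⟩ := hex
    obtain ⟨hwS, hwK⟩ := hwSK
    obtain ⟨c, hc⟩ := hwS
    rw [Matrix.mulVecLin_apply] at hc
    have hwN : N *ᵥ w = 0 := hwK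
    set σ' : Fin (ρ+1) → ℝ := fun j => σ (Fin.castLE hcast j) with hσ'def
    have hDE : (diagonal fun i => (σ i : ℂ)) * E = E * diagonal (fun j => (σ' j : ℂ)) := by
      ext i j
      rw [Matrix.diagonal_mul, Matrix.mul_diagonal]
      simp only [hEdef, Matrix.of_apply]
      split_ifs with h
      · rw [mul_one, one_mul, hσ'def]
        have : i = Fin.castLE hcast j := Fin.ext (by simpa using h)
        rw [this]
      · rw [mul_zero, zero_mul]
    have hMw : (M - N) *ᵥ w = U *ᵥ (E *ᵥ ((diagonal fun j => (σ' j : ℂ)) *ᵥ c)) := by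
      rw [Matrix.sub_mulVec, hwN, sub_zero, ← hc, Matrix.mulVec_mulVec]
      have hMB : M * B = U * (E * diagonal (fun j => (σ' j : ℂ))) := by
        rw [hM, hBdef]
        calc U * diagonal (fun i => (σ i : ℂ)) * Vᴴ * (V * E)
            = U * ((diagonal fun i => (σ i : ℂ)) * ((Vᴴ * V) * E)) := by
              rw [Matrix.mul_assoc, Matrix.mul_assoc, Matrix.mul_assoc]
          _ = U * ((diagonal fun i => (σ i : ℂ)) * E) := by rw [hV, Matrix.one_mul]
          _ = _ := by rw [hDE]
      rw [hMB, ← Matrix.mulVec_mulVec, ← Matrix.mulVec_mulVec]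
    have hσ'lb : ∀ j, σ ⟨ρ, hρ⟩ ≤ |σ' j| := by
      intro j
      rw [abs_of_nonneg (hσ0 _)]
      refine hσa ?_
      change (Fin.castLE hcast j : ℕ) ≤ ρ
      simpa using Nat.lt_succ_iff.mp j.isLt
    have henw : ‖(WithLp.equiv 2 (Fin n → ℂ)).symm w‖ = ‖(WithLp.equiv 2 (Fin (ρ+1) → ℂ)).symm c‖ := by
      rw [← hc]
      exact eym_en_iso B hB c
    have hchain : σ ⟨ρ, hρ⟩ * ‖(WithLp.equiv 2 (Fin n → ℂ)).symm w‖
        ≤ ‖M - N‖ * ‖(WithLp.equiv 2 (Fin n → ℂ)).symm w‖ := by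
      calc σ ⟨ρ, hρ⟩ * ‖(WithLp.equiv 2 (Fin n → ℂ)).symm w‖
          = σ ⟨ρ, hρ⟩ * ‖(WithLp.equiv 2 (Fin (ρ+1) → ℂ)).symm c‖ := by rw [henw]
        _ ≤ ‖(WithLp.equiv 2 (Fin (ρ+1) → ℂ)).symm ((diagonal fun j => (σ' j : ℂ)) *ᵥ c)‖ :=
            eym_en_diag_ge σ' _ (hσ0 _) hσ'lb c
        _ = ‖(WithLp.equiv 2 (Fin (min m n) → ℂ)).symm (E *ᵥ ((diagonal fun j => (σ' j : ℂ)) *ᵥ c))‖ :=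
            (eym_en_iso E hE _).symm
        _ = ‖(WithLp.equiv 2 (Fin m → ℂ)).symm (U *ᵥ (E *ᵥ ((diagonal fun j => (σ' j : ℂ)) *ᵥ c)))‖ :=
            (eym_en_iso U hU _).symm
        _ = ‖(WithLp.equiv 2 (Fin m → ℂ)).symm ((M - N) *ᵥ w)‖ := by rw [hMw]
        _ ≤ ‖M - N‖ * ‖(WithLp.equiv 2 (Fin n → ℂ)).symm w‖ := eym_en_le_norm _ _
    have hwpos : 0 < ‖(WithLp.equiv 2 (Fin n → ℂ)).symm w‖ := by
      rw [norm_pos_iff]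
      intro h
      exact hw0 (by simpa using congrArg (WithLp.equiv 2 (Fin n → ℂ)) h)
    rw [spec_eq_norm]
    exact le_of_mul_le_mul_right hchain hwpos
  -- Part 2
  refine ⟨part1, ?_, part3⟩
  refine le_antisymm ?_ (part3 Mρ part1)
  have hdiff : M - Mρ = U * diagonal
      (fun i : Fin (min m n) => ((if (i : ℕ) < ρ then 0 else σ i : ℝ) : ℂ)) * Vᴴ := by
    rw [hM, hMρ, ← Matrix.sub_mul, ← Matrix.mul_sub, Matrix.diagonal_sub]
    have heq : (fun i : Fin (min m n) => (σ i : ℂ) - if (i : ℕ) < ρ then (σ i : ℂ) else 0)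
        = fun i : Fin (min m n) => ((if (i : ℕ) < ρ then 0 else σ i : ℝ) : ℂ) := by
      funext i
      split_ifs with h <;> simp
    rw [heq]
  rw [spec_eq_norm, hdiff, eym_norm_mul_iso V hV, eym_norm_iso_mul U hU]
  refine eym_norm_le_of_en _ _ (hσ0 _) ?_
  refine eym_en_diag_le _ _ (hσ0 _) ?_
  intro i
  by_cases h : (i : ℕ) < ρ
  · rw [if_pos h, abs_zero]
    exact hσ0 _
  · rw [if_neg h, abs_of_nonneg (hσ0 _)]
    refine hσa ?_
    change ρ ≤ (i : ℕ)
    omega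
end

section
/- Let A be a k×r complex matrix and B an r×l complex matrix, with r ≤ min(k,l), and suppose rank(A) = rank(B) = r (both have full rank r). Then ‖(AB)⁺‖₂ ≤ ‖A⁺‖₂ · ‖B⁺‖₂, where X⁺ denotes the Moore–Penrose pseudoinverse of X. -/
/-!
If `A` has full column rank and `B` full row rank, their pseudoinverses are one-sided inverses:
`A⁺ A = 1` and `B B⁺ = 1` (an idempotent of full rank is the identity). Then `B⁺ A⁺` satisfies
the four Moore–Penrose conditions for `AB`, so by uniqueness `(AB)⁺ = B⁺ A⁺`, and the bound is
submultiplicativity of the spectral norm.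
-/

open Matrix

/-- `X` is the Moore–Penrose pseudoinverse of `A` (the four Moore–Penrose conditions). -/
def IsMPInv {k r : ℕ} (A : Matrix (Fin k) (Fin r) ℂ) (X : Matrix (Fin r) (Fin k) ℂ) : Prop :=
  A * X * A = A ∧ X * A * X = X ∧ (A * X)ᴴ = A * X ∧ (X * A)ᴴ = X * A

open scoped Matrix.Norms.L2Operator in
theorem spec_mul_le {m n p : ℕ} (X : Matrix (Fin m) (Fin n) ℂ) (Y : Matrix (Fin n) (Fin p) ℂ) :
    spec (X * Y) ≤ spec X * spec Y :=
  l2_opNorm_mul X Y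

theorem Matrix.isUnit_of_rank_eq_card {n K : Type*} [Fintype n] [DecidableEq n] [Field K]
    {P : Matrix n n K} (h : P.rank = Fintype.card n) : IsUnit P := by
  rw [← mulVec_surjective_iff_isUnit, ← coe_mulVecLin, ← LinearMap.range_eq_top]
  apply Submodule.eq_top_of_finrank_eq
  rwa [Module.finrank_fintype_fun_eq_card]

theorem Matrix.eq_one_of_isIdempotentElem_of_rank_eq_card {n K : Type*} [Fintype n]
    [DecidableEq n] [Field K] {P : Matrix n n K} (hP : IsIdempotentElem P)
    (h : P.rank = Fintype.card n) : P = 1 :=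
  (IsIdempotentElem.iff_eq_one_of_isUnit (isUnit_of_rank_eq_card h)).mp hP

namespace IsMPInv

variable {k r l : ℕ} {A : Matrix (Fin k) (Fin r) ℂ} {X : Matrix (Fin r) (Fin k) ℂ}

theorem unique {Y : Matrix (Fin r) (Fin k) ℂ} (hX : IsMPInv A X) (hY : IsMPInv A Y) :
    X = Y := by
  obtain ⟨hX1, hX2, hX3, hX4⟩ := hX
  obtain ⟨hY1, hY2, hY3, hY4⟩ := hY
  have hXY : X = X * A * Y :=
    calc X = X * (A * X)ᴴ := by rw [hX3, ← Matrix.mul_assoc, hX2]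
    _ = X * ((A * Y) * (A * X))ᴴ := by rw [← Matrix.mul_assoc (A * Y) A X, hY1]
    _ = X * ((A * X) * (A * Y)) := by rw [conjTranspose_mul, hX3, hY3]
    _ = X * A * Y := by simp only [← Matrix.mul_assoc, hX2]
  have hYX : Y = X * A * Y :=
    calc Y = (Y * A)ᴴ * Y := by rw [hY4, hY2]
    _ = ((Y * A) * (X * A))ᴴ * Y := by rw [Matrix.mul_assoc Y A, ← Matrix.mul_assoc A X A, hX1]
    _ = ((X * A) * (Y * A)) * Y := by rw [conjTranspose_mul, hX4, hY4]
    _ = X * A * Y := by simp only [Matrix.mul_assoc, hY2]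
  rw [hXY, ← hYX]

theorem pinv_mul_self_eq_one (hX : IsMPInv A X) (hA : A.rank = r) : X * A = 1 := by
  refine eq_one_of_isIdempotentElem_of_rank_eq_card ?_ ?_
  · rw [IsIdempotentElem, ← Matrix.mul_assoc, hX.2.1]
  · refine le_antisymm (rank_le_card_width _) ?_
    calc Fintype.card (Fin r) = (A * (X * A)).rank := by
          rw [← Matrix.mul_assoc, hX.1, hA, Fintype.card_fin]
    _ ≤ (X * A).rank := rank_mul_le_right _ _

theorem self_mul_pinv_eq_one (hX : IsMPInv A X) (hA : A.rank = k) : A * X = 1 := by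
  refine eq_one_of_isIdempotentElem_of_rank_eq_card ?_ ?_
  · rw [IsIdempotentElem, ← Matrix.mul_assoc, hX.1]
  · refine le_antisymm (rank_le_card_width _) ?_
    calc Fintype.card (Fin k) = (A * X * A).rank := by rw [hX.1, hA, Fintype.card_fin]
    _ ≤ (A * X).rank := rank_mul_le_left _ _

theorem mul {B : Matrix (Fin r) (Fin l) ℂ} {Y : Matrix (Fin l) (Fin r) ℂ}
    (hX : IsMPInv A X) (hY : IsMPInv B Y) (hXA : X * A = 1) (hBY : B * Y = 1) :
    IsMPInv (A * B) (Y * X) := by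
  have hAB : A * B * (Y * X) = A * X := by
    rw [Matrix.mul_assoc, ← Matrix.mul_assoc B, hBY, Matrix.one_mul]
  have hYX : Y * X * (A * B) = Y * B := by
    rw [Matrix.mul_assoc, ← Matrix.mul_assoc X, hXA, Matrix.one_mul]
  refine ⟨?_, ?_, ?_, ?_⟩
  · rw [hAB, ← Matrix.mul_assoc, hX.1]
  · rw [hYX, Matrix.mul_assoc, ← Matrix.mul_assoc B, hBY, Matrix.one_mul]
  · rw [hAB, hX.2.2.1]
  · rw [hYX, hY.2.2.2]

end IsMPInv

theorem pinv_product_norm_spectral_general {k r l : ℕ}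
    (A : Matrix (Fin k) (Fin r) ℂ) (B : Matrix (Fin r) (Fin l) ℂ)
    (hA : A.rank = r) (hB : B.rank = r)
    (Ap : Matrix (Fin r) (Fin k) ℂ) (hAp : IsMPInv A Ap)
    (Bp : Matrix (Fin l) (Fin r) ℂ) (hBp : IsMPInv B Bp)
    (Gp : Matrix (Fin l) (Fin k) ℂ) (hGp : IsMPInv (A * B) Gp) :
    spec Gp ≤ spec Ap * spec Bp := by
  have hprod : IsMPInv (A * B) (Bp * Ap) :=
    hAp.mul hBp (hAp.pinv_mul_self_eq_one hA) (hBp.self_mul_pinv_eq_one hB)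
  rw [hGp.unique hprod, mul_comm (spec Ap)]
  exact spec_mul_le Bp Ap

/-- Norm of the pseudoinverse of a matrix product, spectral-norm version: if
`A` is `k×r` and `B` is `r×l`, with `r ≤ min(k,l)`, and both have full rank `r`,
then `‖(AB)⁺‖₂ ≤ ‖A⁺‖₂ · ‖B⁺‖₂`. -/
theorem pinv_product_norm_spectral {k r l : ℕ} (hrk : r ≤ k) (hrl : r ≤ l)
    (A : Matrix (Fin k) (Fin r) ℂ) (B : Matrix (Fin r) (Fin l) ℂ)
    (hA : A.rank = r) (hB : B.rank = r)
    (Ap : Matrix (Fin r) (Fin k) ℂ) (hAp : IsMPInv A Ap)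
    (Bp : Matrix (Fin l) (Fin r) ℂ) (hBp : IsMPInv B Bp)
    (Gp : Matrix (Fin l) (Fin k) ℂ) (hGp : IsMPInv (A * B) Gp) :
    spec Gp ≤ spec Ap * spec Bp :=
  pinv_product_norm_spectral_general A B hA hB Ap hAp Bp hBp Gp hGp
end

section
/- Let A be an m×k complex matrix with SVD A = U_A Σ_A V_A^* (U_A of size m×k with orthonormal columns, V_A k×k unitary), and let B be a k×n complex matrix with SVD B = U_B Σ_B V_B^* (U_B k×k unitary, V_B of size n×k with orthonormal columns). Let W = Σ_A V_A^* U_B Σ_B and let W = U_W Σ_W V_W^* be an SVD of W with U_W, V_W k×k unitary. Then the m×k matrix U_A U_W and the n×k matrix V_B V_W have orthonormal columns and AB = (U_A U_W) Σ_W (V_B V_W)^*, so that this factorization is an SVD of AB. -/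
open Matrix

theorem Matrix.conjTranspose_mul_self_mul_eq_one {l m n R : Type*} [Fintype l] [Fintype m]
    [DecidableEq m] [DecidableEq n] [Semiring R] [StarRing R]
    {U : Matrix l m R} {V : Matrix m n R} (hU : Uᴴ * U = 1) (hV : Vᴴ * V = 1) :
    (U * V)ᴴ * (U * V) = 1 := by
  rw [conjTranspose_mul, Matrix.mul_assoc, ← Matrix.mul_assoc Uᴴ, hU, Matrix.one_mul, hV]

theorem product_svd_factorization_general {m n k : ℕ}
    (A : Matrix (Fin m) (Fin k) ℂ) (B : Matrix (Fin k) (Fin n) ℂ)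
    (UA : Matrix (Fin m) (Fin k) ℂ) (a : Fin k → ℝ) (VA : Matrix (Fin k) (Fin k) ℂ)
    (hUA : UAᴴ * UA = 1)
    (hA : A = UA * Matrix.diagonal (fun i => (a i : ℂ)) * VAᴴ)
    (UB : Matrix (Fin k) (Fin k) ℂ) (b : Fin k → ℝ) (VB : Matrix (Fin n) (Fin k) ℂ)
    (hVB : VBᴴ * VB = 1)
    (hB : B = UB * Matrix.diagonal (fun i => (b i : ℂ)) * VBᴴ)
    (W : Matrix (Fin k) (Fin k) ℂ)
    (hW : W = Matrix.diagonal (fun i => (a i : ℂ)) * VAᴴ * UB *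
      Matrix.diagonal (fun i => (b i : ℂ)))
    (UW : Matrix (Fin k) (Fin k) ℂ) (w : Fin k → ℝ) (VW : Matrix (Fin k) (Fin k) ℂ)
    (hUW : UWᴴ * UW = 1) (hVW : VWᴴ * VW = 1)
    (hWsvd : W = UW * Matrix.diagonal (fun i => (w i : ℂ)) * VWᴴ) :
    (UA * UW)ᴴ * (UA * UW) = 1 ∧ (VB * VW)ᴴ * (VB * VW) = 1 ∧
      A * B = (UA * UW) * Matrix.diagonal (fun i => (w i : ℂ)) * (VB * VW)ᴴ := by
  refine ⟨conjTranspose_mul_self_mul_eq_one hUA hUW,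
    conjTranspose_mul_self_mul_eq_one hVB hVW, ?_⟩
  calc A * B = UA * (Matrix.diagonal (fun i => (a i : ℂ)) * VAᴴ * UB *
        Matrix.diagonal (fun i => (b i : ℂ))) * VBᴴ := by
          rw [hA, hB]; simp only [Matrix.mul_assoc]
    _ = UA * W * VBᴴ := by rw [hW]
    _ = (UA * UW) * Matrix.diagonal (fun i => (w i : ℂ)) * (VB * VW)ᴴ := by
          rw [hWsvd, conjTranspose_mul]; simp only [Matrix.mul_assoc]

/-- Let `A = U_A Σ_A V_Aᴴ` be an SVD of the `m×k` matrix `A` (`U_A` of size `m×k` with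
orthonormal columns, `V_A` a `k×k` unitary, `Σ_A` diagonal with nonincreasing nonnegative
entries `a`) and let `B = U_B Σ_B V_Bᴴ` be an SVD of the `k×n` matrix `B` (`U_B` a `k×k`
unitary, `V_B` of size `n×k` with orthonormal columns, `Σ_B` diagonal with nonincreasing
nonnegative entries `b`). Let `W = Σ_A V_Aᴴ U_B Σ_B` and let `W = U_W Σ_W V_Wᴴ` be an SVD
of `W` with `U_W`, `V_W` unitary `k×k` matrices. Then `U_A U_W` and `V_B V_W` have
orthonormal columns and `AB = (U_A U_W) Σ_W (V_B V_W)ᴴ`, so that this factorization is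
an SVD of `AB`. -/
theorem product_svd_factorization {m n k : ℕ}
    (A : Matrix (Fin m) (Fin k) ℂ) (B : Matrix (Fin k) (Fin n) ℂ)
    (UA : Matrix (Fin m) (Fin k) ℂ) (a : Fin k → ℝ) (VA : Matrix (Fin k) (Fin k) ℂ)
    (hUA : UAᴴ * UA = 1) (hVA : VAᴴ * VA = 1) (ha0 : ∀ i, 0 ≤ a i) (haa : Antitone a)
    (hA : A = UA * Matrix.diagonal (fun i => (a i : ℂ)) * VAᴴ)
    (UB : Matrix (Fin k) (Fin k) ℂ) (b : Fin k → ℝ) (VB : Matrix (Fin n) (Fin k) ℂ)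
    (hUB : UBᴴ * UB = 1) (hVB : VBᴴ * VB = 1) (hb0 : ∀ i, 0 ≤ b i) (hba : Antitone b)
    (hB : B = UB * Matrix.diagonal (fun i => (b i : ℂ)) * VBᴴ)
    (W : Matrix (Fin k) (Fin k) ℂ)
    (hW : W = Matrix.diagonal (fun i => (a i : ℂ)) * VAᴴ * UB *
      Matrix.diagonal (fun i => (b i : ℂ)))
    (UW : Matrix (Fin k) (Fin k) ℂ) (w : Fin k → ℝ) (VW : Matrix (Fin k) (Fin k) ℂ)
    (hUW : UWᴴ * UW = 1) (hVW : VWᴴ * VW = 1) (hw0 : ∀ i, 0 ≤ w i) (hwa : Antitone w)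
    (hWsvd : W = UW * Matrix.diagonal (fun i => (w i : ℂ)) * VWᴴ) :
    (UA * UW)ᴴ * (UA * UW) = 1 ∧ (VB * VW)ᴴ * (VB * VW) = 1 ∧
      A * B = (UA * UW) * Matrix.diagonal (fun i => (w i : ℂ)) * (VB * VW)ᴴ :=
  product_svd_factorization_general A B UA a VA hUA hA UB b VB hVB hB W hW UW w VW hUW hVW hWsvd
end
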